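/- Let A be a bialgebra, k algebraically closed, and M a finite-dimensional k-vector space. Let YD(M) ⊆ Hom(A⊗M,M) × Hom(M,M⊗A) be the affine subvariety of pairs (ω,ρ) making M a left-right Yetter-Drinfel'd module over A. Then for any point (ω,ρ) ∈ YD(M), the tangent space T_{(ω,ρ)}(YD(M)) is contained in Z^1(M,M), the space of 1-cocycles of the Yetter-Drinfel'd bicomplex of (M,ω,ρ) with itself. -/
import Mathlib

open TensorProduct
noncomputable section

namespace PS

variable (k : Type) [Field k] (A : Type) [Ring A] [Bialgebra k A]

/-- Left-nested tensor powers with base `B`: `pwr B n = B ⊗ A ⊗ ⋯ ⊗ A` (`n` copies of `A`). -/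
def pwr (B : ModuleCat k) : ℕ → ModuleCat k
  | 0 => B
  | n + 1 => ModuleCat.of k (pwr B n ⊗[k] A)

/-- `A^{⊗ n}` realized as `pwr k n`, i.e. `k ⊗ A ⊗ ⋯ ⊗ A`. -/
abbrev Pk (n : ℕ) : ModuleCat k := pwr k A (ModuleCat.of k k) n

abbrev μA : A ⊗[k] A →ₗ[k] A := LinearMap.mul' k A
abbrev ΔA : A →ₗ[k] A ⊗[k] A := Coalgebra.comul
abbrev εA : A →ₗ[k] k := Coalgebra.counit

/-- Multiplication of the tensorands in slots `i` and `i+1` (`1 ≤ i ≤ n`);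
junk (zero map) for other `i`. -/
def mulP : (n : ℕ) → (i : ℕ) → ((Pk k A (n+1) : Type) →ₗ[k] Pk k A n)
  | 0, _ => 0
  | n + 1, i =>
      if i = n + 1 then
        (TensorProduct.map (LinearMap.id : (Pk k A n : Type) →ₗ[k] Pk k A n) (μA k A)).comp
          (TensorProduct.assoc k (Pk k A n) A A).toLinearMap
      else
        TensorProduct.map (mulP n i) (LinearMap.id : A →ₗ[k] A)

/-- Insert an `A`-factor at the innermost slot (slot 1). -/
def insP : (n : ℕ) → (A ⊗[k] (Pk k A n : Type)) ≃ₗ[k] (Pk k A (n+1) : Type)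
  | 0 => TensorProduct.comm k A k
  | n + 1 =>
      (TensorProduct.assoc k A (Pk k A n) A).symm.trans
        (TensorProduct.congr (insP n) (LinearEquiv.refl k A))

section NM

variable {N : Type} [AddCommGroup N] [Module k N]

/-- The left diagonal action of `A` on `N ⊗ A^{⊗ p}` built from a base action `ωN`. -/
def ldiag (ωN : A ⊗[k] N →ₗ[k] N) :
    (p : ℕ) → (A ⊗[k] (pwr k A (ModuleCat.of k N) p : Type) →ₗ[k] pwr k A (ModuleCat.of k N) p)
  | 0 => ωN
  | p + 1 =>
      (TensorProduct.map (ldiag ωN p) (μA k A)).comp <|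
        ((TensorProduct.tensorTensorTensorComm k A A
            (pwr k A (ModuleCat.of k N) p : Type) A).toLinearMap).comp
          (TensorProduct.map (ΔA k A) (LinearMap.id :
            ((pwr k A (ModuleCat.of k N) p : Type) ⊗[k] A) →ₗ[k] _))

/-- Right diagonal multiplication on the `A`-slots of `N ⊗ A^{⊗ p}` (counit on the base). -/
def rdiagE : (p : ℕ) →
    ((pwr k A (ModuleCat.of k N) p : Type) ⊗[k] A →ₗ[k] pwr k A (ModuleCat.of k N) p)
  | 0 => (TensorProduct.rid k N).toLinearMap.comp
      (TensorProduct.map (LinearMap.id : N →ₗ[k] N) (εA k A))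
  | p + 1 =>
      (TensorProduct.map (rdiagE p) (μA k A)).comp <|
        ((TensorProduct.tensorTensorTensorComm k
            (pwr k A (ModuleCat.of k N) p : Type) A A A).toLinearMap).comp
          (TensorProduct.map
            (LinearMap.id : ((pwr k A (ModuleCat.of k N) p : Type) ⊗[k] A) →ₗ[k] _) (ΔA k A))

/-- Right diagonal action on `N ⊗ A^{⊗ p}` built from a base (right) action `ωNr`. -/
def rdiagAct (ωNr : N ⊗[k] A →ₗ[k] N) : (p : ℕ) →
    ((pwr k A (ModuleCat.of k N) p : Type) ⊗[k] A →ₗ[k] pwr k A (ModuleCat.of k N) p)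
  | 0 => ωNr
  | p + 1 =>
      (TensorProduct.map (rdiagAct ωNr p) (μA k A)).comp <|
        ((TensorProduct.tensorTensorTensorComm k
            (pwr k A (ModuleCat.of k N) p : Type) A A A).toLinearMap).comp
          (TensorProduct.map
            (LinearMap.id : ((pwr k A (ModuleCat.of k N) p : Type) ⊗[k] A) →ₗ[k] _) (ΔA k A))

end NM

/-- `dL : A^{⊗ n} → A ⊗ A^{⊗ n}`, `a^1 ⊗ ⋯ ⊗ a^n ↦ Σ (a^1)_1 ⋯ (a^n)_1 ⊗ ((a^1)_2 ⊗ ⋯ ⊗ (a^n)_2)`. -/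
def dL : (n : ℕ) → ((Pk k A n : Type) →ₗ[k] A ⊗[k] (Pk k A n : Type))
  | 0 => (TensorProduct.map (Algebra.linearMap k A) (LinearMap.id : k →ₗ[k] k)).comp
      (TensorProduct.lid k k).symm.toLinearMap
  | n + 1 =>
      (TensorProduct.map (μA k A)
          (LinearMap.id : ((Pk k A n : Type) ⊗[k] A) →ₗ[k] _)).comp <|
        ((TensorProduct.tensorTensorTensorComm k A (Pk k A n : Type) A A).toLinearMap).comp
          (TensorProduct.map (dL n) (ΔA k A))

/-- `dR : A^{⊗ n} → A^{⊗ n} ⊗ A`, `a^1 ⊗ ⋯ ⊗ a^n ↦ Σ ((a^1)_1 ⊗ ⋯ ⊗ (a^n)_1) ⊗ (a^1)_2 ⋯ (a^n)_2`. -/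
def dR : (n : ℕ) → ((Pk k A n : Type) →ₗ[k] (Pk k A n : Type) ⊗[k] A)
  | 0 => (TensorProduct.map (LinearMap.id : k →ₗ[k] k) (Algebra.linearMap k A)).comp
      (TensorProduct.rid k k).symm.toLinearMap
  | n + 1 =>
      (TensorProduct.map
          (LinearMap.id : ((Pk k A n : Type) ⊗[k] A) →ₗ[k] _) (μA k A)).comp <|
        ((TensorProduct.tensorTensorTensorComm k (Pk k A n : Type) A A A).toLinearMap).comp
          (TensorProduct.map (dR n) (ΔA k A))

section Base

variable {N : Type} [AddCommGroup N] [Module k N]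

/-- Apply `ρN : N → N ⊗ A` to the base of `N ⊗ A^{⊗ p}`. -/
def rhoBase (ρN : N →ₗ[k] N ⊗[k] A) : (p : ℕ) →
    ((pwr k A (ModuleCat.of k N) p : Type) →ₗ[k] pwr k A (ModuleCat.of k (N ⊗[k] A)) p)
  | 0 => ρN
  | p + 1 => TensorProduct.map (rhoBase ρN p) (LinearMap.id : A →ₗ[k] A)

/-- Reinterpret `(N ⊗ A) ⊗ A^{⊗ p}` as `N ⊗ A^{⊗ (p+1)}`. -/
def shiftB : (p : ℕ) →
    ((pwr k A (ModuleCat.of k (N ⊗[k] A)) p : Type) ≃ₗ[k] pwr k A (ModuleCat.of k N) (p+1))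
  | 0 => LinearEquiv.refl k (N ⊗[k] A)
  | p + 1 => TensorProduct.congr (shiftB p) (LinearEquiv.refl k A)

/-- Multiply the `A`-component of the base `N ⊗ A` on the right by an element of `A`. -/
def rmulBase : (p : ℕ) →
    ((pwr k A (ModuleCat.of k (N ⊗[k] A)) p : Type) ⊗[k] A →ₗ[k]
      pwr k A (ModuleCat.of k (N ⊗[k] A)) p)
  | 0 => (TensorProduct.map (LinearMap.id : N →ₗ[k] N) (μA k A)).comp
      (TensorProduct.assoc k N A A).toLinearMap
  | p + 1 =>
      (TensorProduct.map (rmulBase p) (LinearMap.id : A →ₗ[k] A)).comp <|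
        ((TensorProduct.assoc k (pwr k A (ModuleCat.of k (N ⊗[k] A)) p : Type) A A).symm.toLinearMap).comp <|
          (TensorProduct.map
            (LinearMap.id : (pwr k A (ModuleCat.of k (N ⊗[k] A)) p : Type) →ₗ[k] _)
            (TensorProduct.comm k A A).toLinearMap).comp
            (TensorProduct.assoc k
              (pwr k A (ModuleCat.of k (N ⊗[k] A)) p : Type) A A).toLinearMap

/-- Apply the counit to the `A`-component of the base `N ⊗ A`. -/
def epsBase : (p : ℕ) →
    ((pwr k A (ModuleCat.of k (N ⊗[k] A)) p : Type) →ₗ[k] pwr k A (ModuleCat.of k N) p)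
  | 0 => (TensorProduct.rid k N).toLinearMap.comp
      (TensorProduct.map (LinearMap.id : N →ₗ[k] N) (εA k A))
  | p + 1 => TensorProduct.map (epsBase p) (LinearMap.id : A →ₗ[k] A)

/-- Apply `Δ` on the `i`-th `A`-slot (`1 ≤ i ≤ p`) of `N ⊗ A^{⊗ p}`; junk otherwise. -/
def comulAt : (p : ℕ) → (i : ℕ) →
    ((pwr k A (ModuleCat.of k N) p : Type) →ₗ[k] pwr k A (ModuleCat.of k N) (p+1))
  | 0, _ => 0
  | p + 1, i =>
      if i = p + 1 then
        ((TensorProduct.assoc k (pwr k A (ModuleCat.of k N) p : Type) A A).symm.toLinearMap).comp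
          (TensorProduct.map
            (LinearMap.id : (pwr k A (ModuleCat.of k N) p : Type) →ₗ[k] _) (ΔA k A))
      else
        TensorProduct.map (comulAt p i) (LinearMap.id : A →ₗ[k] A)

/-- Left coaction on `N ⊗ A^{⊗ p}` coming from a left coaction on the base. -/
def lcoBase (ρNl : N →ₗ[k] A ⊗[k] N) : (p : ℕ) →
    ((pwr k A (ModuleCat.of k N) p : Type) →ₗ[k]
      A ⊗[k] (pwr k A (ModuleCat.of k N) p : Type))
  | 0 => ρNl
  | p + 1 =>
      ((TensorProduct.assoc k A (pwr k A (ModuleCat.of k N) p : Type) A).toLinearMap).comp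
        (TensorProduct.map (lcoBase ρNl p) (LinearMap.id : A →ₗ[k] A))

end Base

section Bicomplex

variable {M N : Type} [AddCommGroup M] [Module k M] [AddCommGroup N] [Module k N]

/-- `A^{⊗ n} ⊗ M`, the domain of the `(n,p)` cochains. -/
abbrev Dm (M : Type) [AddCommGroup M] [Module k M] (n : ℕ) : Type :=
  (Pk k A n : Type) ⊗[k] M

/-- `N ⊗ A^{⊗ p}`. -/
abbrev Cd (N : Type) [AddCommGroup N] [Module k N] (p : ℕ) : Type :=
  (pwr k A (ModuleCat.of k N) p : Type)

/-- The space of `(n,p)` cochains `Hom(A^{⊗ n} ⊗ M, N ⊗ A^{⊗ p})`. -/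
abbrev Yc (M N : Type) [AddCommGroup M] [Module k M] [AddCommGroup N] [Module k N]
    (n p : ℕ) : Type := Dm k A M n →ₗ[k] Cd k A N p

variable (ωM : A ⊗[k] M →ₗ[k] M) (ρM : M →ₗ[k] M ⊗[k] A)
variable (ωN : A ⊗[k] N →ₗ[k] N) (ρN : N →ₗ[k] N ⊗[k] A)

/-- `b_0`: the face using the diagonal left action of `a^1` on `N ⊗ A^{⊗ p}`. -/
def face0 (n p : ℕ) (f : Yc k A M N n p) : Yc k A M N (n+1) p :=
  (ldiag k A ωN p).comp <|
    (TensorProduct.map (LinearMap.id : A →ₗ[k] A) f).comp <|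
      ((TensorProduct.assoc k A (Pk k A n : Type) M).toLinearMap).comp
        (TensorProduct.map (insP k A n).symm.toLinearMap (LinearMap.id : M →ₗ[k] M))

/-- `b_i`, `1 ≤ i ≤ n`: multiply the adjacent arguments `a^i a^{i+1}`. -/
def faceMid (n p : ℕ) (i : ℕ) (f : Yc k A M N n p) : Yc k A M N (n+1) p :=
  f.comp (TensorProduct.map (mulP k A n i) (LinearMap.id : M →ₗ[k] M))

/-- `b_{n+1}` in the Hopf-module case: `f(a^1 ⊗ ⋯ ⊗ a^n ⊗ a^{n+1}·m)`. -/
def faceLastH (n p : ℕ) (f : Yc k A M N n p) : Yc k A M N (n+1) p :=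
  f.comp <|
    (TensorProduct.map (LinearMap.id : (Pk k A n : Type) →ₗ[k] _) ωM).comp
      (TensorProduct.assoc k (Pk k A n : Type) A M).toLinearMap

/-- `b_{n+1}` in the Yetter-Drinfel'd case. -/
def faceLastYD (n p : ℕ) (f : Yc k A M N n p) : Yc k A M N (n+1) p :=
  (rdiagE k A p).comp <|
    ((TensorProduct.comm k A (Cd k A N p)).toLinearMap).comp <|
      (TensorProduct.map (LinearMap.id : A →ₗ[k] A)
        (f.comp (TensorProduct.map (LinearMap.id : (Pk k A n : Type) →ₗ[k] _) ωM))).comp <|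
        ((TensorProduct.leftComm k (Pk k A n : Type) A (A ⊗[k] M)).toLinearMap).comp <|
          (TensorProduct.map (LinearMap.id : (Pk k A n : Type) →ₗ[k] _)
            (TensorProduct.assoc k A A M).toLinearMap).comp <|
            ((TensorProduct.assoc k (Pk k A n : Type) (A ⊗[k] A) M).toLinearMap).comp
              (TensorProduct.map
                (TensorProduct.map (LinearMap.id : (Pk k A n : Type) →ₗ[k] _) (ΔA k A))
                (LinearMap.id : M →ₗ[k] M))

/-- The Yetter-Drinfel'd horizontal faces `b_i^{n,p}`, `0 ≤ i ≤ n+1`. -/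
def bYD (n p : ℕ) (i : ℕ) (f : Yc k A M N n p) : Yc k A M N (n+1) p :=
  if i = 0 then face0 k A ωN n p f
  else if i ≤ n then faceMid k A n p i f
  else faceLastYD k A ωM n p f

/-- The Hopf-module horizontal faces `b_i^{n,p}`, `0 ≤ i ≤ n+1`. -/
def bH (n p : ℕ) (i : ℕ) (f : Yc k A M N n p) : Yc k A M N (n+1) p :=
  if i = 0 then face0 k A ωN n p f
  else if i ≤ n then faceMid k A n p i f
  else faceLastH k A ωM n p f

/-- `c_0` in the Hopf-module case: apply `ρ_N` to the `N`-component of the output. -/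
def cof0H (n p : ℕ) (f : Yc k A M N n p) : Yc k A M N n (p+1) :=
  ((shiftB k A p).toLinearMap).comp ((rhoBase k A ρN p).comp f)

/-- `c_0` in the Yetter-Drinfel'd case. -/
def cof0YD (n p : ℕ) (f : Yc k A M N n p) : Yc k A M N n (p+1) :=
  ((shiftB k A p).toLinearMap).comp <|
    (rmulBase k A p).comp <|
      ((TensorProduct.comm k A
          (pwr k A (ModuleCat.of k (N ⊗[k] A)) p : Type)).toLinearMap).comp <|
        (TensorProduct.map (LinearMap.id : A →ₗ[k] A) ((rhoBase k A ρN p).comp f)).comp <|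
          ((TensorProduct.assoc k A (Pk k A n : Type) M).toLinearMap).comp
            (TensorProduct.map (dL k A n) (LinearMap.id : M →ₗ[k] M))

/-- `c_{p+1}`: uses the right comodule structure of `M`. -/
def cofLast (n p : ℕ) (f : Yc k A M N n p) : Yc k A M N n (p+1) :=
  (TensorProduct.map f (μA k A)).comp <|
    ((TensorProduct.tensorTensorTensorComm k (Pk k A n : Type) A M A).toLinearMap).comp
      (TensorProduct.map (dR k A n) ρM)

/-- The Yetter-Drinfel'd vertical cofaces `c_j^{n,p}`, `0 ≤ j ≤ p+1`. -/
def cYD (n p : ℕ) (j : ℕ) (f : Yc k A M N n p) : Yc k A M N n (p+1) :=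
  if j = 0 then cof0YD k A ρN n p f
  else if j ≤ p then (comulAt k A p j).comp f
  else cofLast k A ρM n p f

/-- The Hopf-module vertical cofaces `c_j^{n,p}`, `0 ≤ j ≤ p+1`. -/
def cH (n p : ℕ) (j : ℕ) (f : Yc k A M N n p) : Yc k A M N n (p+1) :=
  if j = 0 then cof0H k A ρN n p f
  else if j ≤ p then (comulAt k A p j).comp f
  else cofLast k A ρM n p f

/-- The horizontal differential (Yetter-Drinfel'd case). -/
def dmYD (n p : ℕ) (f : Yc k A M N n p) : Yc k A M N (n+1) p :=
  ∑ i ∈ Finset.range (n+2), ((-1 : ℤ)^i) • bYD k A ωM ωN n p i f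

/-- The vertical differential (Yetter-Drinfel'd case). -/
def dcYD (n p : ℕ) (f : Yc k A M N n p) : Yc k A M N n (p+1) :=
  ∑ j ∈ Finset.range (p+2), ((-1 : ℤ)^j) • cYD k A ρM ρN n p j f

/-- The horizontal differential (Hopf-module case). -/
def dmH (n p : ℕ) (f : Yc k A M N n p) : Yc k A M N (n+1) p :=
  ∑ i ∈ Finset.range (n+2), ((-1 : ℤ)^i) • bH k A ωM ωN n p i f

/-- The vertical differential (Hopf-module case). -/
def dcH (n p : ℕ) (f : Yc k A M N n p) : Yc k A M N n (p+1) :=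
  ∑ j ∈ Finset.range (p+2), ((-1 : ℤ)^j) • cH k A ρM ρN n p j f

end Bicomplex

section Structures

variable {M : Type} [AddCommGroup M] [Module k M]

/-- `(M, ωM)` is a left `A`-module. -/
def IsModule (ωM : A ⊗[k] M →ₗ[k] M) : Prop :=
  (∀ m : M, ωM ((1 : A) ⊗ₜ m) = m) ∧
  ∀ (a b : A) (m : M), ωM (a ⊗ₜ ωM (b ⊗ₜ m)) = ωM ((a * b) ⊗ₜ m)

/-- `(M, ρM)` is a right `A`-comodule. -/
def IsComodule (ρM : M →ₗ[k] M ⊗[k] A) : Prop :=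
  ((TensorProduct.rid k M).toLinearMap.comp
      ((TensorProduct.map (LinearMap.id : M →ₗ[k] M) (εA k A)).comp ρM) = LinearMap.id) ∧
  (TensorProduct.map ρM (LinearMap.id : A →ₗ[k] A)).comp ρM =
    ((TensorProduct.assoc k M A A).symm.toLinearMap).comp
      ((TensorProduct.map (LinearMap.id : M →ₗ[k] M) (ΔA k A)).comp ρM)

/-- The map `a ⊗ m ↦ Σ a_1·m_0 ⊗ a_2 m_1`. -/
def hopfRHS (ωM : A ⊗[k] M →ₗ[k] M) (ρM : M →ₗ[k] M ⊗[k] A) :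
    A ⊗[k] M →ₗ[k] M ⊗[k] A :=
  (TensorProduct.map ωM (μA k A)).comp <|
    ((TensorProduct.tensorTensorTensorComm k A A M A).toLinearMap).comp
      (TensorProduct.map (ΔA k A) ρM)

/-- The map `a ⊗ m ↦ Σ (a_2·m)_0 ⊗ (a_2·m)_1 a_1`. -/
def ydLHS (ωM : A ⊗[k] M →ₗ[k] M) (ρM : M →ₗ[k] M ⊗[k] A) :
    A ⊗[k] M →ₗ[k] M ⊗[k] A :=
  (TensorProduct.map (LinearMap.id : M →ₗ[k] M) (μA k A)).comp <|
    ((TensorProduct.assoc k M A A).toLinearMap).comp <|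
      ((TensorProduct.comm k A (M ⊗[k] A)).toLinearMap).comp <|
        (TensorProduct.map (LinearMap.id : A →ₗ[k] A) (ρM.comp ωM)).comp <|
          ((TensorProduct.assoc k A A M).toLinearMap).comp
            (TensorProduct.map (ΔA k A) (LinearMap.id : M →ₗ[k] M))

/-- `(M, ωM, ρM)` is a left-right Yetter-Drinfel'd module over `A`. -/
def IsYetterDrinfeld (ωM : A ⊗[k] M →ₗ[k] M) (ρM : M →ₗ[k] M ⊗[k] A) : Prop :=
  IsModule k A ωM ∧ IsComodule k A ρM ∧
    ydLHS k A ωM ρM = hopfRHS k A ωM ρM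

/-- `(M, ωM, ρM)` is a left-right Hopf module over `A`. -/
def IsHopfModule (ωM : A ⊗[k] M →ₗ[k] M) (ρM : M →ₗ[k] M ⊗[k] A) : Prop :=
  IsModule k A ωM ∧ IsComodule k A ρM ∧
    ρM.comp ωM = hopfRHS k A ωM ρM

end Structures


section Cocycles

variable (k : Type) [Field k] (A : Type) [Ring A] [Bialgebra k A]
variable {M N : Type} [AddCommGroup M] [Module k M] [AddCommGroup N] [Module k N]
variable (ωM : A ⊗[k] M →ₗ[k] M) (ρM : M →ₗ[k] M ⊗[k] A)
variable (ωN : A ⊗[k] N →ₗ[k] N) (ρN : N →ₗ[k] N ⊗[k] A)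

/-- First 1-cocycle condition:
`ω' ∘ (id ⊗ ω_M) + ω_N ∘ (id ⊗ ω') = ω' ∘ (μ ⊗ id)` (as maps `(A ⊗ A) ⊗ M → N`). -/
def Cocycle1 (ω' : A ⊗[k] M →ₗ[k] N) : Prop :=
  ω'.comp ((TensorProduct.map (LinearMap.id : A →ₗ[k] A) ωM).comp
      (TensorProduct.assoc k A A M).toLinearMap) +
    ωN.comp ((TensorProduct.map (LinearMap.id : A →ₗ[k] A) ω').comp
      (TensorProduct.assoc k A A M).toLinearMap) =
  ω'.comp (TensorProduct.map (μA k A) (LinearMap.id : M →ₗ[k] M))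

/-- Second 1-cocycle condition:
`(ρ' ⊗ id) ∘ ρ_M + (ρ_N ⊗ id) ∘ ρ' = (id ⊗ Δ) ∘ ρ'` (as maps `M → (N ⊗ A) ⊗ A`). -/
def Cocycle2 (ρ' : M →ₗ[k] N ⊗[k] A) : Prop :=
  (TensorProduct.map ρ' (LinearMap.id : A →ₗ[k] A)).comp ρM +
    (TensorProduct.map ρN (LinearMap.id : A →ₗ[k] A)).comp ρ' =
  ((TensorProduct.assoc k N A A).symm.toLinearMap).comp
    ((TensorProduct.map (LinearMap.id : N →ₗ[k] N) (ΔA k A)).comp ρ')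

/-- `a ⊗ m ↦ Σ ω(a_1 ⊗ m_0) ⊗ a_2 m_1`, i.e. `(ω ⊗ μ) ∘ (id ⊗ τ ⊗ id) ∘ (Δ ⊗ ρ)`. -/
def mixLHS (ω : A ⊗[k] M →ₗ[k] N) (ρ : M →ₗ[k] M ⊗[k] A) : A ⊗[k] M →ₗ[k] N ⊗[k] A :=
  (TensorProduct.map ω (μA k A)).comp <|
    ((TensorProduct.tensorTensorTensorComm k A A M A).toLinearMap).comp
      (TensorProduct.map (ΔA k A) ρ)

/-- `a ⊗ m ↦ Σ ω(a_1 ⊗ ρ'(m)-part)` : `(ω_N ⊗ μ) ∘ (id ⊗ τ_N ⊗ id) ∘ (Δ ⊗ ρ')`. -/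
def mixLHS' (ω : A ⊗[k] N →ₗ[k] N) (ρ' : M →ₗ[k] N ⊗[k] A) : A ⊗[k] M →ₗ[k] N ⊗[k] A :=
  (TensorProduct.map ω (μA k A)).comp <|
    ((TensorProduct.tensorTensorTensorComm k A A N A).toLinearMap).comp
      (TensorProduct.map (ΔA k A) ρ')

/-- `(id ⊗ μ) ∘ (ρ' ⊗ id) ∘ τ_M ∘ (id ⊗ ω) ∘ (Δ ⊗ id)`,
`a ⊗ m ↦ Σ ρ'(a_2·m)_0 ⊗ ρ'(a_2·m)_1 a_1`. -/
def mixRHS (ω : A ⊗[k] M →ₗ[k] M) (ρ' : M →ₗ[k] N ⊗[k] A) : A ⊗[k] M →ₗ[k] N ⊗[k] A :=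
  (TensorProduct.map (LinearMap.id : N →ₗ[k] N) (μA k A)).comp <|
    ((TensorProduct.assoc k N A A).toLinearMap).comp <|
      (TensorProduct.map ρ' (LinearMap.id : A →ₗ[k] A)).comp <|
        ((TensorProduct.comm k A M).toLinearMap).comp <|
          (TensorProduct.map (LinearMap.id : A →ₗ[k] A) ω).comp <|
            ((TensorProduct.assoc k A A M).toLinearMap).comp
              (TensorProduct.map (ΔA k A) (LinearMap.id : M →ₗ[k] M))

/-- `(id ⊗ μ) ∘ (ρ_N ⊗ id) ∘ τ_N ∘ (id ⊗ ω') ∘ (Δ ⊗ id)`. -/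
def mixRHS' (ω' : A ⊗[k] M →ₗ[k] N) (ρ : N →ₗ[k] N ⊗[k] A) : A ⊗[k] M →ₗ[k] N ⊗[k] A :=
  (TensorProduct.map (LinearMap.id : N →ₗ[k] N) (μA k A)).comp <|
    ((TensorProduct.assoc k N A A).toLinearMap).comp <|
      (TensorProduct.map ρ (LinearMap.id : A →ₗ[k] A)).comp <|
        ((TensorProduct.comm k A N).toLinearMap).comp <|
          (TensorProduct.map (LinearMap.id : A →ₗ[k] A) ω').comp <|
            ((TensorProduct.assoc k A A M).toLinearMap).comp
              (TensorProduct.map (ΔA k A) (LinearMap.id : M →ₗ[k] M))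

/-- Third 1-cocycle condition in the Yetter-Drinfel'd case. -/
def Cocycle3YD (ω' : A ⊗[k] M →ₗ[k] N) (ρ' : M →ₗ[k] N ⊗[k] A) : Prop :=
  mixLHS k A ω' ρM + mixLHS' k A ωN ρ' = mixRHS k A ωM ρ' + mixRHS' k A ω' ρN

/-- Third 1-cocycle condition in the Hopf-module case. -/
def Cocycle3H (ω' : A ⊗[k] M →ₗ[k] N) (ρ' : M →ₗ[k] N ⊗[k] A) : Prop :=
  mixLHS k A ω' ρM + mixLHS' k A ωN ρ' = ρ'.comp ωM + ρN.comp ω'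

/-- `Z^1(M,N)` for Yetter-Drinfel'd modules. -/
def Z1YD (ω' : A ⊗[k] M →ₗ[k] N) (ρ' : M →ₗ[k] N ⊗[k] A) : Prop :=
  Cocycle1 k A ωM ωN ω' ∧ Cocycle2 k A ρM ρN ρ' ∧ Cocycle3YD k A ωM ρM ωN ρN ω' ρ'

/-- `Z^1(M,N)` for Hopf modules. -/
def Z1H (ω' : A ⊗[k] M →ₗ[k] N) (ρ' : M →ₗ[k] N ⊗[k] A) : Prop :=
  Cocycle1 k A ωM ωN ω' ∧ Cocycle2 k A ρM ρN ρ' ∧ Cocycle3H k A ωM ρM ωN ρN ω' ρ'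

/-- `B^1(M,N)`: the pair is `(d_m(f), d_c(f))` for some `f : M → N`. -/
def B1 (ω' : A ⊗[k] M →ₗ[k] N) (ρ' : M →ₗ[k] N ⊗[k] A) : Prop :=
  ∃ f : M →ₗ[k] N,
    ω' = ωN.comp (TensorProduct.map (LinearMap.id : A →ₗ[k] A) f) - f.comp ωM ∧
    ρ' = ρN.comp f - (TensorProduct.map f (LinearMap.id : A →ₗ[k] A)).comp ρM

/-- The action of the extension `N ⊕_{(ω',ρ')} M`: `a·(n,m) = (a·n + ω'(a⊗m), a·m)`. -/
def sumAct (ω' : A ⊗[k] M →ₗ[k] N) : A ⊗[k] (N × M) →ₗ[k] N × M :=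
  LinearMap.prod
    (ωN.comp (TensorProduct.map (LinearMap.id : A →ₗ[k] A) (LinearMap.fst k N M)) +
      ω'.comp (TensorProduct.map (LinearMap.id : A →ₗ[k] A) (LinearMap.snd k N M)))
    (ωM.comp (TensorProduct.map (LinearMap.id : A →ₗ[k] A) (LinearMap.snd k N M)))

/-- The coaction of the extension `N ⊕_{(ω',ρ')} M`:
`λ(n,m) = ρ_N(n) + ρ'(m) + ρ_M(m)`. -/
def sumCo (ρ' : M →ₗ[k] N ⊗[k] A) : (N × M) →ₗ[k] (N × M) ⊗[k] A :=
  (TensorProduct.map (LinearMap.inl k N M) (LinearMap.id : A →ₗ[k] A)).comp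
      (ρN.comp (LinearMap.fst k N M)) +
    (TensorProduct.map (LinearMap.inl k N M) (LinearMap.id : A →ₗ[k] A)).comp
      (ρ'.comp (LinearMap.snd k N M)) +
    (TensorProduct.map (LinearMap.inr k N M) (LinearMap.id : A →ₗ[k] A)).comp
      (ρM.comp (LinearMap.snd k N M))

/-- A linear map is a morphism for the given module/comodule structures. -/
def IsBicompatHom {X Y : Type} [AddCommGroup X] [Module k X] [AddCommGroup Y] [Module k Y]
    (ωX : A ⊗[k] X →ₗ[k] X) (ρX : X →ₗ[k] X ⊗[k] A)
    (ωY : A ⊗[k] Y →ₗ[k] Y) (ρY : Y →ₗ[k] Y ⊗[k] A) (f : X →ₗ[k] Y) : Prop :=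
  f.comp ωX = ωY.comp (TensorProduct.map (LinearMap.id : A →ₗ[k] A) f) ∧
    ρY.comp f = (TensorProduct.map f (LinearMap.id : A →ₗ[k] A)).comp ρX

end Cocycles

section Tangent

variable (k : Type) [Field k] (A : Type) [Ring A] [Bialgebra k A]
variable {M : Type} [AddCommGroup M] [Module k M]

/-- The derivative at `(ω,ρ)` of the Yetter-Drinfel'd compatibility map
`a ⊗ m ↦ Σ (a_2·m)_0 ⊗ (a_2·m)_1 a_1` in the direction `(ω',ρ')`. -/
def ydLHSderiv (ω ω' : A ⊗[k] M →ₗ[k] M) (ρ ρ' : M →ₗ[k] M ⊗[k] A) :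
    A ⊗[k] M →ₗ[k] M ⊗[k] A :=
  (TensorProduct.map (LinearMap.id : M →ₗ[k] M) (μA k A)).comp <|
    ((TensorProduct.assoc k M A A).toLinearMap).comp <|
      ((TensorProduct.comm k A (M ⊗[k] A)).toLinearMap).comp <|
        (TensorProduct.map (LinearMap.id : A →ₗ[k] A)
            (ρ'.comp ω + ρ.comp ω')).comp <|
          ((TensorProduct.assoc k A A M).toLinearMap).comp
            (TensorProduct.map (ΔA k A) (LinearMap.id : M →ₗ[k] M))

/-- `(ω',ρ')` is a first-order deformation of the point `(ω,ρ)` of the affine variety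
`𝒴𝒟(M)`, i.e. a solution of the linearizations at `(ω,ρ)` of its defining polynomial
equations.  Every Zariski tangent vector of `𝒴𝒟(M)` at `(ω,ρ)` is of this form. -/
def IsYDTangentVector (ω ω' : A ⊗[k] M →ₗ[k] M) (ρ ρ' : M →ₗ[k] M ⊗[k] A) : Prop :=
  -- linearized unit axiom
  (∀ m : M, ω' ((1 : A) ⊗ₜ m) = 0) ∧
  -- linearized associativity
  (∀ (a b : A) (m : M),
    ω' ((a * b) ⊗ₜ m) = ω' (a ⊗ₜ ω (b ⊗ₜ m)) + ω (a ⊗ₜ ω' (b ⊗ₜ m))) ∧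
  -- linearized counit axiom
  ((TensorProduct.rid k M).toLinearMap.comp
      ((TensorProduct.map (LinearMap.id : M →ₗ[k] M) (εA k A)).comp ρ') = 0) ∧
  -- linearized coassociativity
  ((TensorProduct.map ρ' (LinearMap.id : A →ₗ[k] A)).comp ρ +
      (TensorProduct.map ρ (LinearMap.id : A →ₗ[k] A)).comp ρ' =
    ((TensorProduct.assoc k M A A).symm.toLinearMap).comp
      ((TensorProduct.map (LinearMap.id : M →ₗ[k] M) (ΔA k A)).comp ρ')) ∧
  -- linearized Yetter-Drinfel'd compatibility
  (ydLHSderiv k A ω ω' ρ ρ' = hopfRHS k A ω' ρ + hopfRHS k A ω ρ')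

end Tangent

/-- Let `k` be algebraically closed, `A` a finite-dimensional
bialgebra and `M` a finite-dimensional vector space.  For any point `(ω,ρ)` of the
affine variety `𝒴𝒟(M)` of Yetter-Drinfel'd module structures on `M`, the Zariski
tangent space `T_{(ω,ρ)}(𝒴𝒟(M))` (described by the linearizations of the defining
polynomial equations) is contained in `Z^1(M,M)`. -/
theorem tangent_subset_Z1 (k : Type) [Field k] [IsAlgClosed k]
    (A : Type) [Ring A] [Bialgebra k A] [FiniteDimensional k A]
    (M : Type) [AddCommGroup M] [Module k M] [FiniteDimensional k M]
    (ω : A ⊗[k] M →ₗ[k] M) (ρ : M →ₗ[k] M ⊗[k] A)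
    (hYD : IsYetterDrinfeld k A ω ρ)
    (ω' : A ⊗[k] M →ₗ[k] M) (ρ' : M →ₗ[k] M ⊗[k] A)
    (htang : IsYDTangentVector k A ω ω' ρ ρ') :
    Z1YD k A ω ρ ω ρ ω' ρ' := by
  obtain ⟨h1, h2, h3, h4, h5⟩ := htang
  refine ⟨?_, h4, ?_⟩
  · -- Cocycle1
    apply TensorProduct.ext_threefold
    intro a b m
    simp only [LinearMap.add_apply, LinearMap.comp_apply,
      LinearEquiv.coe_coe, TensorProduct.assoc_tmul, TensorProduct.map_tmul,
      LinearMap.id_coe, id_eq, LinearMap.mul'_apply]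
    rw [← h2 a b m]
  · -- Cocycle3
    unfold Cocycle3YD
    have e1 : mixLHS k A ω' ρ = hopfRHS k A ω' ρ := rfl
    have e2 : mixLHS' k A ω ρ' = hopfRHS k A ω ρ' := rfl
    rw [e1, e2, ← h5]
    -- it remains to show ydLHSderiv = mixRHS ω ρ' + mixRHS' ω' ρ
    have key : ∀ (f : M →ₗ[k] M ⊗[k] A) (w : A ⊗[k] M →ₗ[k] M),
        ((TensorProduct.comm k A (M ⊗[k] A)).toLinearMap).comp
          (TensorProduct.map (LinearMap.id : A →ₗ[k] A) (f.comp w)) =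
        (TensorProduct.map f (LinearMap.id : A →ₗ[k] A)).comp
          (((TensorProduct.comm k A M).toLinearMap).comp
            (TensorProduct.map (LinearMap.id : A →ₗ[k] A) w)) := by
      intro f w
      apply TensorProduct.ext'
      intro a x
      simp
    have key' : ∀ (f : M →ₗ[k] M ⊗[k] A) (w : A ⊗[k] M →ₗ[k] M),
        ((TensorProduct.comm k A (M ⊗[k] A)).toLinearMap).comp
          ((TensorProduct.map (LinearMap.id : A →ₗ[k] A) (f.comp w)).comp
            (((TensorProduct.assoc k A A M).toLinearMap).comp
              (TensorProduct.map (ΔA k A) (LinearMap.id : M →ₗ[k] M)))) =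
        (TensorProduct.map f (LinearMap.id : A →ₗ[k] A)).comp
          (((TensorProduct.comm k A M).toLinearMap).comp
            ((TensorProduct.map (LinearMap.id : A →ₗ[k] A) w).comp
              (((TensorProduct.assoc k A A M).toLinearMap).comp
                (TensorProduct.map (ΔA k A) (LinearMap.id : M →ₗ[k] M))))) := by
      intro f w
      rw [← LinearMap.comp_assoc, key f w]
      simp only [LinearMap.comp_assoc]
    unfold ydLHSderiv mixRHS mixRHS'
    rw [TensorProduct.map_add_right]
    simp only [LinearMap.comp_add, LinearMap.add_comp]
    rw [key' ρ' ω, key' ρ ω']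

end PS
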